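/- Let k ≥ 1 be an integer, s > 1, and C > 0. There exists δ > 0, depending only on k, s, and C, with the following property: for every Borel probability measure μ on ℝ² supported in the annulus {x ∈ ℝ² : 1/2 ≤ ‖x‖ ≤ 1} and satisfying μ(B(x,r)) ≤ C r^s for all x ∈ ℝ² and r > 0, there exist Borel sets E₁,…,E_{k+1} ⊂ ℝ² with μ(E_i) > 0 for every i, such that for all i ≠ j and all x ∈ E_i, y ∈ E_j one has |x·y^⊥| ≥ δ. -/

import Mathlib

open MeasureTheory Real
open scoped ENNReal

noncomputable section

/-- The plane `ℝ²` with the Euclidean norm. -/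
abbrev Plane : Type := EuclideanSpace ℝ (Fin 2)

/-- The point `(a, b) ∈ ℝ²`. -/
def e2 (a b : ℝ) : Plane := (WithLp.equiv 2 (Fin 2 → ℝ)).symm ![a, b]

/-- The signed area `x · y^⊥`, where `y^⊥ = (−y₂, y₁)`. -/
def sarea (x y : Plane) : ℝ := x 0 * (-(y 1)) + x 1 * y 0

/-- The action of `SL₂(ℝ)` on `ℝ²` by matrix-vector multiplication. -/
def SL2act (g : Matrix.SpecialLinearGroup (Fin 2) ℝ) (v : Plane) : Plane :=
  (WithLp.equiv 2 (Fin 2 → ℝ)).symm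
    (Matrix.mulVec (g : Matrix (Fin 2) (Fin 2) ℝ) ((WithLp.equiv 2 (Fin 2 → ℝ)) v))

/-!
For nonzero `x, y`, `|x·y^⊥| / (‖x‖‖y‖)` is the sine of the angle between the lines `ℝx`
and `ℝy`; on the annulus, `|x·y^⊥|` therefore satisfies the triangle inequality up to a
factor `2`. The points `y` of the unit disc with `|p·y^⊥| ≤ ‖p‖ t` form a `t`-neighbourhood
of a segment of length `2`, covered by `O(1/t)` balls of radius `2t`; by the Frostman
condition with `s > 1` its measure is `O(t^(s-1))`, uniformly in `μ`. For `t` small, `k`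
such strips cannot exhaust `μ`, so one picks greedily `k + 1` points of the support of `μ`
in the annulus, each outside the strips of the previous ones. Small angular neighbourhoods
of these points have positive measure and are angle separated.
-/

open Filter Topology

namespace Plane

lemma norm_sq_eq (x : Plane) : ‖x‖ ^ 2 = x 0 ^ 2 + x 1 ^ 2 := by
  simp [EuclideanSpace.real_norm_sq_eq, Fin.sum_univ_two]

lemma inner_eq (x y : Plane) : inner ℝ x y = x 0 * y 0 + x 1 * y 1 := by
  simp [PiLp.inner_apply, Fin.sum_univ_two, mul_comm]

end Plane

lemma sarea_anticomm (x y : Plane) : sarea y x = -sarea x y := by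
  simp only [sarea]; ring

lemma abs_sarea_comm (x y : Plane) : |sarea y x| = |sarea x y| := by
  rw [sarea_anticomm, abs_neg]

lemma sarea_self (x : Plane) : sarea x x = 0 := by
  simp only [sarea]; ring

lemma sarea_smul_left (a : ℝ) (x y : Plane) : sarea (a • x) y = a * sarea x y := by
  simp only [sarea, PiLp.smul_apply, smul_eq_mul]; ring

lemma continuous_sarea_left (y : Plane) : Continuous fun x => sarea x y := by
  unfold sarea; fun_prop

lemma sarea_sq_add_inner_sq (x y : Plane) :
    sarea x y ^ 2 + inner ℝ x y ^ 2 = ‖x‖ ^ 2 * ‖y‖ ^ 2 := by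
  rw [Plane.norm_sq_eq, Plane.norm_sq_eq, Plane.inner_eq, sarea]; ring

lemma norm_sq_mul_sarea (x y z : Plane) :
    ‖y‖ ^ 2 * sarea x z = sarea x y * inner ℝ y z + inner ℝ x y * sarea y z := by
  rw [Plane.norm_sq_eq, Plane.inner_eq, Plane.inner_eq, sarea, sarea, sarea]; ring

lemma norm_mul_abs_sarea_le (x y z : Plane) :
    ‖y‖ * |sarea x z| ≤ ‖z‖ * |sarea x y| + ‖x‖ * |sarea y z| := by
  rcases (norm_nonneg y).eq_or_lt with hy | hy
  · rw [← hy, zero_mul]; positivity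
  refine le_of_mul_le_mul_left ?_ hy
  calc ‖y‖ * (‖y‖ * |sarea x z|) = |sarea x y * inner ℝ y z + inner ℝ x y * sarea y z| := by
        rw [← norm_sq_mul_sarea, abs_mul, abs_of_nonneg (sq_nonneg ‖y‖)]; ring
    _ ≤ |sarea x y| * (‖y‖ * ‖z‖) + ‖x‖ * ‖y‖ * |sarea y z| := by
        grw [abs_add_le, abs_mul, abs_mul, abs_real_inner_le_norm, abs_real_inner_le_norm]
    _ = ‖y‖ * (‖z‖ * |sarea x y| + ‖x‖ * |sarea y z|) := by ring

lemma abs_sarea_le_two_mul {x y z : Plane} (hx : ‖x‖ ≤ 1) (hy : 1 / 2 ≤ ‖y‖) (hz : ‖z‖ ≤ 1) :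
    |sarea x z| ≤ 2 * (|sarea x y| + |sarea y z|) := by
  have := norm_mul_abs_sarea_le x y z
  have : ‖z‖ * |sarea x y| ≤ |sarea x y| := mul_le_of_le_one_left (abs_nonneg _) hz
  have : ‖x‖ * |sarea y z| ≤ |sarea y z| := mul_le_of_le_one_left (abs_nonneg _) hx
  nlinarith [abs_nonneg (sarea x z)]

lemma lt_abs_sarea_of_abs_sarea_lt {p q y z : Plane} {r : ℝ} (hp : ‖p‖ ≤ 1) (hq : ‖q‖ ≤ 1)
    (hy : 1 / 2 ≤ ‖y‖ ∧ ‖y‖ ≤ 1) (hz : 1 / 2 ≤ ‖z‖) (hpq : 10 * r ≤ |sarea p q|)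
    (hyp : |sarea y p| < r) (hzq : |sarea z q| < r) : r < |sarea y z| := by
  have h₁ := abs_sarea_le_two_mul hp hy.1 hq
  have h₂ := abs_sarea_le_two_mul hy.2 hz hq
  rw [abs_sarea_comm y p] at h₁
  linarith

lemma norm_sub_inner_smul_eq_abs_sarea (y : Plane) {u : Plane} (hu : ‖u‖ = 1) :
    ‖y - inner ℝ y u • u‖ = |sarea y u| := by
  rw [← sq_eq_sq₀ (norm_nonneg _) (abs_nonneg _), sq_abs, norm_sub_sq_real, inner_smul_right,
    norm_smul, Real.norm_eq_abs, hu, mul_one, sq_abs]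
  linear_combination -(sarea_sq_add_inner_sq y u) - ‖y‖ ^ 2 * congrArg (· ^ 2) hu

/-- For `p ≠ 0`, the points of the closed unit disc at distance at most `t` from the
line `ℝ p`. -/
def strip (p : Plane) (t : ℝ) : Set Plane := {y | ‖y‖ ≤ 1 ∧ |sarea p y| ≤ ‖p‖ * t}

lemma strip_inv_norm_smul (p : Plane) (t : ℝ) : strip (‖p‖⁻¹ • p) t = strip p t := by
  rcases eq_or_ne p 0 with rfl | hp
  · simp
  simp [strip, sarea_smul_left, norm_smul, abs_mul, hp, inv_mul_le_iff₀ (norm_pos_iff.mpr hp)]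

lemma lt_abs_sarea_of_notMem_strip {p y : Plane} {t : ℝ} (hp : 1 / 2 ≤ ‖p‖) (hy : ‖y‖ ≤ 1)
    (hyp : y ∉ strip p t) (ht : 0 ≤ t) : t / 2 < |sarea p y| := by
  simp only [strip, Set.mem_ofPred_eq, not_and, not_le] at hyp
  nlinarith [hyp hy]

lemma strip_subset_biUnion_closedBall {u : Plane} (hu : ‖u‖ = 1) {t : ℝ} (ht : 0 < t) :
    strip u t ⊆ ⋃ j ∈ Finset.Icc (-⌈(2 * t)⁻¹⌉) ⌈(2 * t)⁻¹⌉,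
      Metric.closedBall ((2 * t * j) • u) (2 * t) := by
  rintro y ⟨hy, hyu⟩
  rw [hu, one_mul, abs_sarea_comm] at hyu
  set a := inner ℝ y u
  set j := round (a / (2 * t))
  have ha : |a| ≤ 1 := (abs_real_inner_le_norm y u).trans (by rw [hu, mul_one]; exact hy)
  have hround : |a / (2 * t) - j| ≤ 1 / 2 := abs_sub_round _
  have hj : |j| ≤ ⌈(2 * t)⁻¹⌉ := by
    have hbound : |a / (2 * t)| ≤ (2 * t)⁻¹ := by
      rw [abs_div, abs_of_pos (by positivity : (0 : ℝ) < 2 * t), div_eq_mul_inv]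
      exact mul_le_of_le_one_left (by positivity) ha
    have : ((|j| : ℤ) : ℝ) < ⌈(2 * t)⁻¹⌉ + 1 := by
      push_cast
      linarith [abs_sub_abs_le_abs_sub (j : ℝ) (a / (2 * t)), abs_sub_comm (j : ℝ) (a / (2 * t)),
        Int.le_ceil (2 * t)⁻¹]
    exact Int.lt_add_one_iff.mp (by exact_mod_cast this)
  have hnear : |a - 2 * t * j| ≤ t := by
    have hscale : a - 2 * t * j = 2 * t * (a / (2 * t) - j) := by field_simp
    calc |a - 2 * t * j| = 2 * t * |a / (2 * t) - j| := by
          rw [hscale, abs_mul, abs_of_pos (by positivity : (0 : ℝ) < 2 * t)]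
      _ ≤ 2 * t * (1 / 2) := by gcongr
      _ = t := by ring
  refine Set.mem_biUnion (Finset.mem_Icc.mpr (abs_le.mp hj)) ?_
  rw [Metric.mem_closedBall, dist_eq_norm]
  calc ‖y - (2 * t * j) • u‖ = ‖(y - a • u) + (a - 2 * t * j) • u‖ := by
        rw [sub_smul]; abel_nf
    _ ≤ ‖y - a • u‖ + ‖(a - 2 * t * j) • u‖ := norm_add_le _ _
    _ ≤ t + t := by
        rw [norm_sub_inner_smul_eq_abs_sarea y hu, norm_smul, hu, mul_one, Real.norm_eq_abs]
        gcongr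
    _ = 2 * t := by ring

lemma card_Icc_neg_ceil_le {t : ℝ} (ht0 : 0 < t) (ht1 : t ≤ 1) :
    ((Finset.Icc (-⌈(2 * t)⁻¹⌉) ⌈(2 * t)⁻¹⌉).card : ℝ) ≤ 4 / t := by
  have hm : (⌈(2 * t)⁻¹⌉ : ℝ) < (2 * t)⁻¹ + 1 := Int.ceil_lt_add_one _
  have hm0 : 0 ≤ ⌈(2 * t)⁻¹⌉ := Int.ceil_nonneg (by positivity)
  have h3 : 3 ≤ 3 / t := by rw [le_div_iff₀ ht0]; linarith
  rw [Int.card_Icc, ← Int.cast_natCast, Int.toNat_of_nonneg (by omega)]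
  push_cast
  calc _ = 2 * (⌈(2 * t)⁻¹⌉ : ℝ) + 1 := by ring
    _ ≤ 1 / t + 3 := by
        have : 2 * (2 * t)⁻¹ = 1 / t := by field_simp
        linarith
    _ ≤ 4 / t := by linarith [show 1 / t + 3 / t = 4 / t by ring]

lemma measure_strip_le {μ : Measure Plane} {s C : ℝ} (hC : 0 ≤ C)
    (hμ : ∀ (x : Plane) (r : ℝ), 0 < r → μ (Metric.closedBall x r) ≤ ENNReal.ofReal (C * r ^ s))
    {p : Plane} (hp : p ≠ 0) {t : ℝ} (ht0 : 0 < t) (ht1 : t ≤ 1) :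
    μ (strip p t) ≤ ENNReal.ofReal (4 * 2 ^ s * C * t ^ (s - 1)) := by
  have hu : ‖‖p‖⁻¹ • p‖ = 1 := by simp [norm_smul, hp]
  set J := Finset.Icc (-⌈(2 * t)⁻¹⌉) ⌈(2 * t)⁻¹⌉
  calc μ (strip p t) = μ (strip (‖p‖⁻¹ • p) t) := by rw [strip_inv_norm_smul]
    _ ≤ μ (⋃ j ∈ J, Metric.closedBall ((2 * t * j) • (‖p‖⁻¹ • p)) (2 * t)) :=
        measure_mono (strip_subset_biUnion_closedBall hu ht0)
    _ ≤ ∑ j ∈ J, μ (Metric.closedBall ((2 * t * j) • (‖p‖⁻¹ • p)) (2 * t)) :=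
        measure_biUnion_finset_le _ _
    _ ≤ ∑ _j ∈ J, ENNReal.ofReal (C * (2 * t) ^ s) :=
        Finset.sum_le_sum fun _ _ => hμ _ _ (by positivity)
    _ = ENNReal.ofReal (J.card * (C * (2 * t) ^ s)) := by
        rw [Finset.sum_const, nsmul_eq_mul, ENNReal.ofReal_mul (Nat.cast_nonneg J.card),
          ENNReal.ofReal_natCast]
    _ ≤ ENNReal.ofReal (4 * 2 ^ s * C * t ^ (s - 1)) := by
        refine ENNReal.ofReal_le_ofReal ?_
        calc (J.card : ℝ) * (C * (2 * t) ^ s) ≤ 4 / t * (C * (2 * t) ^ s) := by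
              gcongr; exact card_Icc_neg_ceil_le ht0 ht1
          _ = 4 * 2 ^ s * C * t ^ (s - 1) := by
              rw [Real.mul_rpow (by norm_num) ht0.le, Real.rpow_sub_one ht0.ne']; ring

theorem exists_fin_mem_support_notMem {X : Type*} [TopologicalSpace X]
    [HereditarilyLindelofSpace X] [MeasurableSpace X] (μ : Measure X) {A : Set X}
    (N : X → Set X) {ε : ℝ≥0∞} (hN : ∀ x ∈ A, μ (N x) ≤ ε) (n : ℕ) (hn : n * ε < μ A) :
    ∃ x : Fin (n + 1) → X, (∀ i, x i ∈ A ∩ μ.support) ∧ ∀ i j, i < j → x j ∉ N (x i) := by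
  induction n with
  | zero =>
    obtain ⟨p, hp⟩ := Measure.nonempty_inter_support_of_pos (by simpa using hn)
    exact ⟨fun _ => p, fun _ => hp, fun i j hij => absurd hij (by omega)⟩
  | succ n ih =>
    obtain ⟨x, hx, hsep⟩ := ih (lt_of_le_of_lt (by gcongr; simp) hn)
    have hB : μ (⋃ i, N (x i)) < μ A := calc
      μ (⋃ i, N (x i)) ≤ ∑ i, μ (N (x i)) := measure_iUnion_fintype_le _ _
      _ ≤ ∑ _i : Fin (n + 1), ε := Finset.sum_le_sum fun i _ => hN _ (hx i).1
      _ = (n + 1 : ℕ) * ε := by simp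
      _ < μ A := hn
    obtain ⟨p, ⟨hpA, hpN⟩, hp⟩ := Measure.nonempty_inter_support_of_pos
      ((tsub_pos_of_lt hB).trans_le le_measure_sdiff)
    simp only [Set.mem_iUnion, not_exists] at hpN
    refine ⟨Fin.snoc x p, fun i => ?_, fun i j hij => ?_⟩
    · induction i using Fin.lastCases <;> simp [hx, hpA, hp]
    · induction j using Fin.lastCases with
      | last =>
        induction i using Fin.lastCases with
        | last => exact absurd hij (lt_irrefl _)
        | cast i => simpa using hpN i
      | cast j =>
        induction i using Fin.lastCases with
        | last => exact absurd hij (not_lt.mpr (Fin.le_last _))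
        | cast i => simpa using hsep i j (by simpa using hij)

lemma exists_mem_Ioc_mul_rpow_lt_one (K : ℝ) {s : ℝ} (hs : 0 < s) :
    ∃ t ∈ Set.Ioc (0 : ℝ) 1, K * t ^ s < 1 := by
  have hlim : Tendsto (fun t : ℝ => K * t ^ s) (𝓝[>] 0) (𝓝 0) := by
    have := ((Real.continuousAt_rpow_const 0 s (Or.inr hs.le)).tendsto.const_mul K).mono_left
      (nhdsWithin_le_nhds (s := Set.Ioi 0))
    rwa [Real.zero_rpow hs.ne', mul_zero] at this
  obtain ⟨t, hKt, ht⟩ :=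
    ((hlim.eventually (gt_mem_nhds one_pos)).and (Ioc_mem_nhdsGT one_pos)).exists
  exact ⟨t, ht, hKt⟩

theorem statement9_general (k : ℕ) (s C : ℝ) (hs : 1 < s) (hC : 0 < C) :
    ∃ δ : ℝ, 0 < δ ∧
      ∀ μ : Measure Plane, IsProbabilityMeasure μ →
        μ {x : Plane | ¬(1 / 2 ≤ ‖x‖ ∧ ‖x‖ ≤ 1)} = 0 →
        (∀ (x : Plane) (r : ℝ), 0 < r →
          μ (Metric.closedBall x r) ≤ ENNReal.ofReal (C * r ^ s)) →
        ∃ E : Fin (k + 1) → Set Plane,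
          (∀ i, MeasurableSet (E i)) ∧ (∀ i, 0 < μ (E i)) ∧
          ∀ i j, i ≠ j → ∀ x ∈ E i, ∀ y ∈ E j, δ ≤ |sarea x y| := by
  obtain ⟨t, ⟨ht0, ht1⟩, hkt⟩ :=
    exists_mem_Ioc_mul_rpow_lt_one (k * (4 * 2 ^ s * C)) (sub_pos.mpr hs)
  refine ⟨t / 20, by positivity, fun μ _ hsupp hfrost => ?_⟩
  set A := {x : Plane | 1 / 2 ≤ ‖x‖ ∧ ‖x‖ ≤ 1}
  have hAc : μ Aᶜ = 0 := hsupp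
  have hμA : μ A = 1 := by rw [← Set.univ_inter A, measure_inter_conull hAc, measure_univ]
  obtain ⟨x, hx, hsep⟩ := exists_fin_mem_support_notMem μ (strip · t)
    (fun p (hp : p ∈ A) => measure_strip_le hC.le hfrost (norm_pos_iff.mp (by linarith [hp.1]))
      ht0 ht1) k
    (by rw [hμA, ← ENNReal.ofReal_natCast, ← ENNReal.ofReal_mul (by positivity),
      ENNReal.ofReal_lt_one]; linarith)
  have hfar : ∀ i j, i ≠ j → t / 2 ≤ |sarea (x i) (x j)| := by
    intro i j hij
    rcases hij.lt_or_gt with h | h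
    · exact (lt_abs_sarea_of_notMem_strip (hx i).1.1 (hx j).1.2 (hsep i j h) ht0.le).le
    · rw [← abs_sarea_comm]
      exact (lt_abs_sarea_of_notMem_strip (hx j).1.1 (hx i).1.2 (hsep j i h) ht0.le).le
  have hU : ∀ i, IsOpen {y | |sarea y (x i)| < t / 20} := fun i =>
    isOpen_lt (continuous_sarea_left _).abs continuous_const
  refine ⟨fun i => {y | |sarea y (x i)| < t / 20} ∩ A, fun i => ?_, fun i => ?_, ?_⟩
  · exact (hU i).measurableSet.inter (measurable_norm measurableSet_Icc)
  · rw [measure_inter_conull hAc]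
    exact (Measure.mem_support_iff_forall _).mp (hx i).2 _
      ((hU i).mem_nhds (by simp [sarea_self]; positivity))
  · rintro i j hij y ⟨hyi, hyA⟩ z ⟨hzj, hzA⟩
    refine (lt_abs_sarea_of_abs_sarea_lt (hx i).1.2 (hx j).1.2 hyA hzA.1 ?_ hyi hzj).le
    linarith [hfar i j hij]

/-- Angle decomposition: for `k ≥ 1`, `s > 1`, `C > 0` there is `δ > 0`, depending only
on `k`, `s`, `C`, such that every Borel probability measure `μ` on `ℝ²` supported in
the annulus `{1/2 ≤ ‖x‖ ≤ 1}` and satisfying the Frostman condition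
`μ(B(x,r)) ≤ C rˢ` admits Borel sets `E₁, …, E_{k+1}` of positive `μ`-measure that are
angle separated: `|x·y^⊥| ≥ δ` whenever `x ∈ E_i`, `y ∈ E_j`, `i ≠ j`. -/
theorem statement9 (k : ℕ) (hk : 1 ≤ k) (s C : ℝ) (hs : 1 < s) (hC : 0 < C) :
    ∃ δ : ℝ, 0 < δ ∧
      ∀ μ : Measure Plane, IsProbabilityMeasure μ →
        μ {x : Plane | ¬(1 / 2 ≤ ‖x‖ ∧ ‖x‖ ≤ 1)} = 0 →
        (∀ (x : Plane) (r : ℝ), 0 < r →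
          μ (Metric.closedBall x r) ≤ ENNReal.ofReal (C * r ^ s)) →
        ∃ E : Fin (k + 1) → Set Plane,
          (∀ i, MeasurableSet (E i)) ∧ (∀ i, 0 < μ (E i)) ∧
          ∀ i j, i ≠ j → ∀ x ∈ E i, ∀ y ∈ E j, δ ≤ |sarea x y| :=
  statement9_general k s C hs hC
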